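/- For real parameters m > 0 and q > 0, the Bardeen metric function f(r) = 1 − 2 m r² / (r² + q²)^(3/2) satisfies f(r) ≥ 1 − 4 m / (3 √3 q) for all r ∈ ℝ, with equality attained at r = √2 · q. In other words, the infimum of f over ℝ equals 1 − 4 m / (3 √3 q) and is attained at r = √2 · q. -/
import Mathlib


/-- Metric function of the Bardeen regular black hole. -/
noncomputable def bardeenF (m q r : ℝ) : ℝ :=
  1 - 2 * m * r ^ 2 / (r ^ 2 + q ^ 2) ^ ((3 : ℝ) / 2)

lemma rpow32 {x : ℝ} (hx : 0 ≤ x) : x ^ ((3 : ℝ) / 2) = Real.sqrt (x ^ 3) := by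
  rw [Real.sqrt_eq_rpow, ← Real.rpow_natCast x 3, ← Real.rpow_mul hx]
  norm_num

/-- For `m > 0`, `q > 0`, the Bardeen metric function `f` satisfies
`f(r) ≥ 1 − 4m/(3√3 q)` for all real `r`, with equality at `r = √2 q`:
its infimum over `ℝ` is `1 − 4m/(3√3 q)`, attained at `r = √2 q`. -/
theorem bardeen_f_min (m q : ℝ) (hm : 0 < m) (hq : 0 < q) :
    (∀ r : ℝ, 1 - 4 * m / (3 * Real.sqrt 3 * q) ≤ bardeenF m q r) ∧
    bardeenF m q (Real.sqrt 2 * q) = 1 - 4 * m / (3 * Real.sqrt 3 * q) ∧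
    IsLeast (Set.range (bardeenF m q)) (1 - 4 * m / (3 * Real.sqrt 3 * q)) := by
  have h3 : (0:ℝ) < Real.sqrt 3 := Real.sqrt_pos.mpr (by norm_num)
  have h3sq : Real.sqrt 3 ^ 2 = 3 := Real.sq_sqrt (by norm_num)
  have hden : 0 < 3 * Real.sqrt 3 * q := by positivity
  have hforall : ∀ r : ℝ, 1 - 4 * m / (3 * Real.sqrt 3 * q) ≤ bardeenF m q r := by
    intro r
    have hX : (0:ℝ) < r ^ 2 + q ^ 2 := by positivity
    have hS : 0 < Real.sqrt ((r ^ 2 + q ^ 2) ^ 3) := Real.sqrt_pos.mpr (by positivity)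
    have hkey : 3 * Real.sqrt 3 * q * r ^ 2 / 2 ≤ Real.sqrt ((r ^ 2 + q ^ 2) ^ 3) := by
      rw [show (3:ℝ) * Real.sqrt 3 * q * r ^ 2 / 2
          = Real.sqrt ((3 * Real.sqrt 3 * q * r ^ 2 / 2) ^ 2) from
          (Real.sqrt_sq (by positivity)).symm]
      apply Real.sqrt_le_sqrt
      nlinarith [sq_nonneg (r ^ 2 - 2 * q ^ 2), mul_nonneg (sq_nonneg (r ^ 2 - 2 * q ^ 2))
        (by positivity : (0:ℝ) ≤ 4 * r ^ 2 + q ^ 2), sq_nonneg r, sq_nonneg q]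
    unfold bardeenF
    rw [rpow32 hX.le]
    rw [sub_le_sub_iff_left, div_le_div_iff₀ hS hden]
    nlinarith [mul_le_mul_of_nonneg_left hkey (by positivity : (0:ℝ) ≤ 4 * m)]
  have heq : bardeenF m q (Real.sqrt 2 * q) = 1 - 4 * m / (3 * Real.sqrt 3 * q) := by
    have h2sq : Real.sqrt 2 ^ 2 = 2 := Real.sq_sqrt (by norm_num)
    have hr2 : (Real.sqrt 2 * q) ^ 2 = 2 * q ^ 2 := by rw [mul_pow, h2sq]
    unfold bardeenF
    rw [rpow32 (by positivity)]
    rw [hr2]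
    have hcube : (2 * q ^ 2 + q ^ 2) ^ 3 = (3 * Real.sqrt 3 * q ^ 3) ^ 2 := by
      nlinarith [h3sq]
    rw [hcube, Real.sqrt_sq (by positivity)]
    have : 2 * m * (2 * q ^ 2) / (3 * Real.sqrt 3 * q ^ 3)
        = 4 * m / (3 * Real.sqrt 3 * q) := by
      field_simp
      ring
    rw [this]
  refine ⟨hforall, heq, ⟨⟨Real.sqrt 2 * q, heq⟩, ?_⟩⟩
  rintro x ⟨r, rfl⟩
  exact hforall r
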